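/- arXiv:1501.07881 — 7 statements merged into one kernel-verified Lean document; each statement's English description precedes it below -/
import Mathlib

section
/- Let k be a field and n ≥ 2. Let A = {a_ij ∈ k : 1 ≤ i < j ≤ n} be a set of scalars, and let V_n(A) be the k-algebra generated by x_1,…,x_n subject to the relations x_i x_j + x_j x_i = a_ij for all i < j. For a permutation σ ∈ S_n and nonzero scalars r_1,…,r_n ∈ k, the assignment x_i ↦ r_i x_{σ(i)} extends to an algebra automorphism of V_n(A) if and only if a_ij = r_i r_j a_{σ(i)σ(j)} for all i ≠ j (with the convention a_ji = a_ij). -/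
noncomputable section

/-- The defining relations of the modified (−1)-quantum Weyl algebra `V_n(𝒜)`:
`x_i x_j + x_j x_i = a_{ij}` for all `i < j`. -/
def weylRel {k : Type} [CommRing k] (n : ℕ) (a : Fin n → Fin n → k) :
    FreeAlgebra k (Fin n) → FreeAlgebra k (Fin n) → Prop :=
  fun u v => ∃ i j : Fin n, i < j ∧
    u = FreeAlgebra.ι k i * FreeAlgebra.ι k j + FreeAlgebra.ι k j * FreeAlgebra.ι k i ∧
    v = algebraMap k (FreeAlgebra k (Fin n)) (a i j)

/-- The modified (−1)-quantum Weyl algebra `V_n(𝒜)`. -/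
abbrev weylV (k : Type) [CommRing k] (n : ℕ) (a : Fin n → Fin n → k) :=
  RingQuot (weylRel n a)

/-- The generators `x_i` of `V_n(𝒜)`. -/
def weylX (k : Type) [CommRing k] (n : ℕ) (a : Fin n → Fin n → k) (i : Fin n) :
    weylV k n a :=
  RingQuot.mkAlgHom k (weylRel n a) (FreeAlgebra.ι k i)

/-!
Applying an automorphism `g` with `g x_i = r_i x_{σ i}` to the relation `x_i x_j + x_j x_i = a_ij`
gives `a_ij = r_i r_j a_{σi σj}` inside `V_n(A)`, which is an identity of scalars because `k` embeds
in `V_n(A)`: the algebra maps onto the Clifford algebra of a quadratic form with polarization `a`,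
and scalars survive there (change the form to `0` to land in the exterior algebra).
Conversely, under that condition the elements `r_i x_{σ i}` satisfy the defining relations, so the
assignment extends to an endomorphism, and `x_i ↦ r_{σ⁻¹ i}⁻¹ x_{σ⁻¹ i}` extends to its inverse.
-/

namespace weylV

section CommRing

variable {k : Type} [CommRing k] {n : ℕ} {a b : Fin n → Fin n → k}

theorem weylX_mul_add_mul_of_lt {i j : Fin n} (hij : i < j) :
    weylX k n a i * weylX k n a j + weylX k n a j * weylX k n a i =
      algebraMap k (weylV k n a) (a i j) := by
  simpa [weylX] using
    RingQuot.mkAlgHom_rel k (s := weylRel n a) (⟨i, j, hij, rfl, rfl⟩ : weylRel n a _ _)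

theorem weylX_mul_add_mul (ha : ∀ i j, a i j = a j i) {i j : Fin n} (hij : i ≠ j) :
    weylX k n a i * weylX k n a j + weylX k n a j * weylX k n a i =
      algebraMap k (weylV k n a) (a i j) := by
  rcases hij.lt_or_gt with h | h
  · exact weylX_mul_add_mul_of_lt h
  · rw [add_comm, ha]
    exact weylX_mul_add_mul_of_lt h

theorem smul_weylX_mul_add_mul (ha : ∀ i j, a i j = a j i) (s t : k) {i j : Fin n}
    (hij : i ≠ j) :
    (s • weylX k n a i) * (t • weylX k n a j) + (t • weylX k n a j) * (s • weylX k n a i) =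
      algebraMap k (weylV k n a) (s * t * a i j) := by
  rw [smul_mul_smul_comm, smul_mul_smul_comm, mul_comm t s, ← smul_add,
    weylX_mul_add_mul ha hij, Algebra.smul_def, ← map_mul]

def lift {B : Type*} [Ring B] [Algebra k B] (f : Fin n → B)
    (hf : ∀ i j, i < j → f i * f j + f j * f i = algebraMap k B (a i j)) :
    weylV k n a →ₐ[k] B :=
  RingQuot.liftAlgHom k ⟨FreeAlgebra.lift k f, by
    rintro _ _ ⟨i, j, hij, rfl, rfl⟩
    simpa only [map_add, map_mul, FreeAlgebra.lift_ι_apply, AlgHom.commutes] using hf i j hij⟩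

@[simp]
theorem lift_weylX {B : Type*} [Ring B] [Algebra k B] (f : Fin n → B)
    (hf : ∀ i j, i < j → f i * f j + f j * f i = algebraMap k B (a i j)) (i : Fin n) :
    lift f hf (weylX k n a i) = f i := by
  rw [lift, weylX, RingQuot.liftAlgHom_mkAlgHom_apply, FreeAlgebra.lift_ι_apply]

theorem algHom_ext {B : Type*} [Ring B] [Algebra k B] {F G : weylV k n a →ₐ[k] B}
    (h : ∀ i, F (weylX k n a i) = G (weylX k n a i)) : F = G :=
  RingQuot.ringQuot_ext' k F G (FreeAlgebra.hom_ext (funext h))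

variable (a) in
def cliffordForm : LinearMap.BilinForm k (Fin n → k) :=
  Matrix.toLinearMap₂' k (Matrix.of fun i j => if i < j then a i j else 0)

theorem polar_cliffordForm {i j : Fin n} (hij : i < j) :
    QuadraticMap.polar (cliffordForm a).toQuadraticMap (Pi.single i 1) (Pi.single j 1) =
      a i j := by
  rw [LinearMap.BilinMap.polar_toQuadraticMap, cliffordForm, Matrix.toLinearMap₂'_apply',
    Matrix.toLinearMap₂'_apply']
  simp [hij, hij.not_gt]

variable (a) in
def toClifford : weylV k n a →ₐ[k] CliffordAlgebra (cliffordForm a).toQuadraticMap :=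
  lift (fun i => CliffordAlgebra.ι (cliffordForm a).toQuadraticMap (Pi.single i 1))
    fun _ _ hij => by rw [CliffordAlgebra.ι_mul_ι_add_swap, polar_cliffordForm hij]

variable (a) in
theorem algebraMap_injective : Function.Injective (algebraMap k (weylV k n a)) := by
  have h : (-cliffordForm a).toQuadraticMap = 0 - (cliffordForm a).toQuadraticMap := by
    rw [LinearMap.BilinMap.toQuadraticMap_neg, zero_sub]
  refine Function.LeftInverse.injective (g := fun x => ExteriorAlgebra.algebraMapInv
    (CliffordAlgebra.changeForm h (toClifford a x))) fun c => ?_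
  simp only [AlgHom.commutes, CliffordAlgebra.changeForm_algebraMap, Algebra.algebraMap_self,
    RingHom.id_apply]

/-- `a` is obtained from `b` by the substitution `x_i ↦ r_i x_{σ i}`. -/
def IsScaledPerm (a b : Fin n → Fin n → k) (σ : Equiv.Perm (Fin n)) (r : Fin n → k) : Prop :=
  ∀ i j, i ≠ j → a i j = r i * r j * b (σ i) (σ j)

theorem IsScaledPerm.of_algHom (ha : ∀ i j, a i j = a j i) (hb : ∀ i j, b i j = b j i)
    {σ : Equiv.Perm (Fin n)} {r : Fin n → k} (g : weylV k n a →ₐ[k] weylV k n b)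
    (hg : ∀ i, g (weylX k n a i) = r i • weylX k n b (σ i)) : IsScaledPerm a b σ r := by
  intro i j hij
  have h := congrArg g (weylX_mul_add_mul ha hij)
  rw [map_add, map_mul, map_mul, hg, hg, AlgHom.commutes,
    smul_weylX_mul_add_mul hb _ _ (σ.injective.ne hij)] at h
  exact (algebraMap_injective b h).symm

def scaledPermHom (hb : ∀ i j, b i j = b j i) {σ : Equiv.Perm (Fin n)} {r : Fin n → k}
    (h : IsScaledPerm a b σ r) : weylV k n a →ₐ[k] weylV k n b :=
  lift (fun i => r i • weylX k n b (σ i)) fun i j hij => by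
    rw [smul_weylX_mul_add_mul hb _ _ (σ.injective.ne hij.ne), h i j hij.ne]

@[simp]
theorem scaledPermHom_weylX (hb : ∀ i j, b i j = b j i) {σ : Equiv.Perm (Fin n)}
    {r : Fin n → k} (h : IsScaledPerm a b σ r) (i : Fin n) :
    scaledPermHom hb h (weylX k n a i) = r i • weylX k n b (σ i) :=
  lift_weylX _ _ i

end CommRing

section Field

variable {k : Type} [Field k] {n : ℕ} {a b : Fin n → Fin n → k}
  {σ : Equiv.Perm (Fin n)} {r : Fin n → k}

theorem IsScaledPerm.symm (h : IsScaledPerm a b σ r) (hr : ∀ i, r i ≠ 0) :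
    IsScaledPerm b a σ.symm fun i => (r (σ.symm i))⁻¹ := by
  intro i j hij
  rw [h _ _ (σ.symm.injective.ne hij), σ.apply_symm_apply, σ.apply_symm_apply]
  field_simp [hr (σ.symm i), hr (σ.symm j)]

def scaledPermEquiv (ha : ∀ i j, a i j = a j i) (hb : ∀ i j, b i j = b j i)
    (h : IsScaledPerm a b σ r) (hr : ∀ i, r i ≠ 0) : weylV k n a ≃ₐ[k] weylV k n b :=
  AlgEquiv.ofAlgHom (scaledPermHom hb h) (scaledPermHom ha (h.symm hr))
    (algHom_ext fun i => by
      simp [smul_smul, inv_mul_cancel₀ (hr (σ.symm i))])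
    (algHom_ext fun i => by
      simp [smul_smul, mul_inv_cancel₀ (hr i)])

@[simp]
theorem scaledPermEquiv_weylX (ha : ∀ i j, a i j = a j i) (hb : ∀ i j, b i j = b j i)
    (h : IsScaledPerm a b σ r) (hr : ∀ i, r i ≠ 0) (i : Fin n) :
    scaledPermEquiv ha hb h hr (weylX k n a i) = r i • weylX k n b (σ i) :=
  scaledPermHom_weylX hb h i

end Field

end weylV

theorem stmt0_general (k : Type) [Field k] (n : ℕ)
    (a : Fin n → Fin n → k) (hsym : ∀ i j, a i j = a j i)
    (σ : Equiv.Perm (Fin n)) (r : Fin n → k) (hr : ∀ i, r i ≠ 0) :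
    (∃ g : weylV k n a ≃ₐ[k] weylV k n a,
        ∀ i, g (weylX k n a i) = r i • weylX k n a (σ i)) ↔
      ∀ i j, i ≠ j → a i j = r i * r j * a (σ i) (σ j) := by
  constructor
  · rintro ⟨g, hg⟩
    exact weylV.IsScaledPerm.of_algHom hsym hsym g.toAlgHom hg
  · intro h
    exact ⟨weylV.scaledPermEquiv hsym hsym h hr, weylV.scaledPermEquiv_weylX hsym hsym h hr⟩

theorem stmt0 (k : Type) [Field k] (n : ℕ) (hn : 2 ≤ n)
    (a : Fin n → Fin n → k) (hsym : ∀ i j, a i j = a j i)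
    (σ : Equiv.Perm (Fin n)) (r : Fin n → k) (hr : ∀ i, r i ≠ 0) :
    (∃ g : weylV k n a ≃ₐ[k] weylV k n a,
        ∀ i, g (weylX k n a i) = r i • weylX k n a (σ i)) ↔
      ∀ i j, i ≠ j → a i j = r i * r j * a (σ i) (σ j) :=
  stmt0_general k n a hsym σ r hr
end
end

section
/- Let k be a field, n ≥ 3, and a_ij ≠ 0 for all i < j. Then G(A) is a finite group of order at most 2·n!. -/
/-- If `n ≥ 3` and all `a_{ij} ≠ 0`, then the group `G(𝒜)` of pairs
`(σ, (r_1,…,r_n)) ∈ S_n × (k^×)^n` with `a_{ij} = r_i r_j a_{σ(i)σ(j)}` for all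
`i ≠ j` is finite, of order at most `2·n!`. -/
theorem stmt4 (k : Type) [Field k] (n : ℕ) (hn : 3 ≤ n)
    (a : Fin n → Fin n → k) (hsym : ∀ i j, a i j = a j i)
    (ha : ∀ i j, i ≠ j → a i j ≠ 0) :
    letI S : Set (Equiv.Perm (Fin n) × (Fin n → kˣ)) :=
      {p | ∀ i j, i ≠ j →
        a i j = (p.2 i : k) * (p.2 j : k) * a (p.1 i) (p.1 j)}
    S.Finite ∧ S.ncard ≤ 2 * Nat.factorial n := by
  classical
  set S : Set (Equiv.Perm (Fin n) × (Fin n → kˣ)) :=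
    {p | ∀ i j, i ≠ j → a i j = (p.2 i : k) * (p.2 j : k) * a (p.1 i) (p.1 j)}
    with hS
  set i0 : Fin n := ⟨0, by omega⟩ with hi0
  set i1 : Fin n := ⟨1, by omega⟩ with hi1
  set i2 : Fin n := ⟨2, by omega⟩ with hi2
  have h01 : i0 ≠ i1 := by simp [hi0, hi1, Fin.ext_iff]
  have h02 : i0 ≠ i2 := by simp [hi0, hi2, Fin.ext_iff]
  have h12 : i1 ≠ i2 := by simp [hi1, hi2, Fin.ext_iff]
  have hmem : ∀ p : Equiv.Perm (Fin n) × (Fin n → kˣ), p ∈ S ↔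
      ∀ i j, i ≠ j → a i j = (p.2 i : k) * (p.2 j : k) * a (p.1 i) (p.1 j) := by
    intro p; rfl
  -- Lemma A : same permutation and same value at i0 forces equality
  have lemA : ∀ p q : Equiv.Perm (Fin n) × (Fin n → kˣ), p ∈ S → q ∈ S →
      p.1 = q.1 → (p.2 i0 : k) = q.2 i0 → p = q := by
    intro p q hp hq hσ h0
    rw [hmem] at hp hq
    have hr : p.2 = q.2 := by
      funext i
      ext
      by_cases hi : i = i0
      · rw [hi]; exact h0
      · have hne : i0 ≠ i := fun h => hi h.symm
        have e1 := hp i0 i hne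
        have e2 := hq i0 i hne
        rw [hσ] at e1
        have hA : a (q.1 i0) (q.1 i) ≠ 0 :=
          ha _ _ (fun hc => hne (q.1.injective hc))
        have h3 := mul_right_cancel₀ hA (e1.symm.trans e2)
        rw [h0] at h3
        exact mul_left_cancel₀ (Units.ne_zero _) h3
    exact Prod.ext hσ hr
  -- Lemma B : same permutation forces value at i0 to agree up to sign
  have lemB : ∀ p q : Equiv.Perm (Fin n) × (Fin n → kˣ), p ∈ S → q ∈ S →
      p.1 = q.1 → (p.2 i0 : k) = q.2 i0 ∨ (p.2 i0 : k) = -(q.2 i0 : k) := by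
    intro p q hp hq hσ
    have key : ∀ u : Equiv.Perm (Fin n) × (Fin n → kˣ), u ∈ S → u.1 = q.1 →
        (u.2 i0 : k) * (u.2 i0 : k) *
          (a (q.1 i0) (q.1 i1) * a (q.1 i0) (q.1 i2) * a i1 i2) =
        a i0 i1 * a i0 i2 * a (q.1 i1) (q.1 i2) := by
      intro u hu h1
      rw [hmem] at hu
      have e1 := hu i0 i1 h01
      have e2 := hu i0 i2 h02
      have e3 := hu i1 i2 h12
      rw [h1] at e1 e2 e3
      rw [e1, e2, e3]; ring
    have hC : a (q.1 i0) (q.1 i1) * a (q.1 i0) (q.1 i2) * a i1 i2 ≠ 0 := by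
      refine mul_ne_zero (mul_ne_zero ?_ ?_) (ha _ _ h12)
      · exact ha _ _ (fun hc => h01 (q.1.injective hc))
      · exact ha _ _ (fun hc => h02 (q.1.injective hc))
    have hsq : (p.2 i0 : k) * (p.2 i0 : k) = (q.2 i0 : k) * (q.2 i0 : k) :=
      mul_right_cancel₀ hC ((key p hp hσ).trans (key q hq rfl).symm)
    have hz : ((p.2 i0 : k) - (q.2 i0 : k)) * ((p.2 i0 : k) + (q.2 i0 : k)) = 0 := by
      linear_combination hsq
    rcases mul_eq_zero.mp hz with h | h
    · exact Or.inl (sub_eq_zero.mp h)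
    · exact Or.inr (eq_neg_of_add_eq_zero_left h)
  -- the injection into a finite type
  let c : Equiv.Perm (Fin n) → k := fun σ =>
    if h : ∃ t, t ∈ S ∧ t.1 = σ then ((h.choose).2 i0 : k) else 0
  let f : S → Equiv.Perm (Fin n) × Bool := fun p =>
    (p.1.1, decide ((p.1.2 i0 : k) = c p.1.1))
  have hf : Function.Injective f := by
    intro p q hfeq
    have hσ : p.1.1 = q.1.1 := (Prod.ext_iff.mp hfeq).1
    have hb : decide ((p.1.2 i0 : k) = c p.1.1) = decide ((q.1.2 i0 : k) = c q.1.1) :=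
      (Prod.ext_iff.mp hfeq).2
    have hex : ∃ t, t ∈ S ∧ t.1 = p.1.1 := ⟨p.1, p.2, rfl⟩
    have hcdef : c p.1.1 = ((hex.choose).2 i0 : k) := dif_pos hex
    obtain ⟨ht, htσ⟩ := hex.choose_spec
    have hcq : c q.1.1 = c p.1.1 := by rw [hσ]
    rw [hcq] at hb
    by_cases hpc : (p.1.2 i0 : k) = c p.1.1
    · have hqc : (q.1.2 i0 : k) = c p.1.1 := by
        have := hb ▸ (decide_eq_true hpc)
        simpa using this.symm
      exact Subtype.ext (lemA p.1 q.1 p.2 q.2 hσ (hpc.trans hqc.symm))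
    · have hqc : ¬ (q.1.2 i0 : k) = c p.1.1 := by
        intro hc
        rw [decide_eq_true hc] at hb
        exact hpc (of_decide_eq_true hb)
      have hp' : (p.1.2 i0 : k) = -((hex.choose).2 i0 : k) := by
        rcases lemB p.1 hex.choose p.2 ht htσ.symm with h | h
        · exact absurd (h.trans hcdef.symm) hpc
        · exact h
      have hq' : (q.1.2 i0 : k) = -((hex.choose).2 i0 : k) := by
        rcases lemB q.1 hex.choose q.2 ht (htσ.trans hσ).symm with h | h
        · exact absurd (h.trans hcdef.symm) hqc
        · exact h
      exact Subtype.ext (lemA p.1 q.1 p.2 q.2 hσ (hp'.trans hq'.symm))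
  have hfin : Finite S := Finite.of_injective f hf
  refine ⟨Set.finite_coe_iff.mp hfin, ?_⟩
  have hle : Nat.card ↥S ≤ Nat.card (Equiv.Perm (Fin n) × Bool) :=
    Nat.card_le_card_of_injective f hf
  have hcard : Nat.card (Equiv.Perm (Fin n) × Bool) = n.factorial * 2 := by
    simp [Nat.card_eq_fintype_card, Fintype.card_perm, Fintype.card_fin]
  rw [hcard] at hle
  rw [← Nat.card_coe_set_eq]
  omega
end

section
/- Let G be a group of order at least 3 (possibly infinite). Then the free product G * G contains a free subgroup of rank two. -/
/-!
Pick distinct nontrivial `g, h ∈ G`, put `c = ![g, h]` and `a k = inl (c k) * inr (c k)`.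
These elements play ping-pong on reduced words of `G ∗ G`: `a k` sends every word that does not
start with the letter `(c k)⁻¹` of the right factor to a word starting with the letter `c k` of
the left factor, and `(a k)⁻¹` sends every word that does not start with that letter to one
starting with `(c k)⁻¹` in the right factor. Hence `a 0` and `a 1` freely generate a free group.
-/

universe u v

open Monoid CoprodI Function

namespace Monoid.CoprodI.Word

variable {ι : Type*} [DecidableEq ι] {M : ι → Type*} [∀ i, Group (M i)] [∀ i, DecidableEq (M i)]

theorem head?_toList_of_smul {i : ι} {m : M i} (hm : m ≠ 1) {w : Word M}
    (hw : w.fstIdx ≠ some i) : (of m • w).toList.head? = some ⟨i, m⟩ := by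
  rw [← cons_eq_smul (h1 := hw) (h2 := hm)]
  rfl

theorem fstIdx_of_smul {i : ι} {m : M i} (hm : m ≠ 1) {w : Word M}
    (hw : w.toList.head? ≠ some ⟨i, m⁻¹⟩) : (of m • w).fstIdx = some i := by
  induction w using consRecOn with
  | empty => simp [fstIdx, head?_toList_of_smul hm (w := empty) (by simp [fstIdx, empty])]
  | cons j x w hw₁ hx _ =>
    by_cases hij : j = i
    · subst hij
      have hmx : m * x ≠ 1 := fun hmx => hw (by simp [cons, eq_inv_of_mul_eq_one_right hmx])
      rw [cons_eq_smul, smul_smul, ← MonoidHom.map_mul]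
      simp only [fstIdx, head?_toList_of_smul hmx hw₁, Option.map_some]
    · simp [fstIdx, head?_toList_of_smul hm (w := cons x w hw₁ hx) (by simp [fstIdx, cons, hij])]

theorem head?_toList_of_smul_of_smul {i j : ι} (hij : i ≠ j) {m : M i} {n : M j}
    (hm : m ≠ 1) (hn : n ≠ 1) {w : Word M} (hw : w.toList.head? ≠ some ⟨j, n⁻¹⟩) :
    (of m • of n • w).toList.head? = some ⟨i, m⟩ :=
  head?_toList_of_smul hm (by rw [fstIdx_of_smul hn hw]; simpa using hij.symm)

end Monoid.CoprodI.Word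

namespace Monoid.CoprodI

variable {ι : Type v} [DecidableEq ι] {M : ι → Type u} [∀ i, Group (M i)]

theorem injective_freeGroupLift_of_mul_of {κ : Type (max u v)} [Nontrivial κ] {i j : ι}
    (hij : i ≠ j) {c : κ → M i} {d : κ → M j} (hc : Injective c) (hd : Injective d)
    (hc₁ : ∀ k, c k ≠ 1) (hd₁ : ∀ k, d k ≠ 1) :
    Injective (FreeGroup.lift fun k => of (c k) * of (d k)) := by
  classical
  let headIs (x : Σ i, M i) : Set (Word M) := {w | w.toList.head? = some x}
  have disjoint_headIs {x y : Σ i, M i} (hxy : x ≠ y) : Disjoint (headIs x) (headIs y) :=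
    Set.disjoint_left.2 fun w hx hy => hxy (Option.some_injective _ (hx.symm.trans hy))
  refine FreeGroup.injective_lift_of_ping_pong (fun k => (of (c k) * of (d k) : CoprodI M))
    (fun k => headIs ⟨i, c k⟩) (fun k => headIs ⟨j, (d k)⁻¹⟩) (fun k => ⟨of (c k) • .empty, ?_⟩)
    ?_ ?_ ?_ ?_ ?_
  · exact Word.head?_toList_of_smul (hc₁ k) (by simp [Word.fstIdx, Word.empty])
  · exact fun k l hkl => disjoint_headIs fun h => hkl (hc (by simpa using h))
  · exact fun k l hkl => disjoint_headIs fun h => hkl (hd (by simpa using h))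
  · exact fun k l => disjoint_headIs fun h => hij (congrArg Sigma.fst h)
  · rintro k _ ⟨w, hw, rfl⟩
    show (of (c k) * of (d k)) • w ∈ _
    rw [mul_smul]
    exact Word.head?_toList_of_smul_of_smul hij (hc₁ k) (hd₁ k) hw
  · rintro k _ ⟨w, hw, rfl⟩
    show (of (c k) * of (d k))⁻¹ • w ∈ _
    rw [mul_inv_rev, ← map_inv, ← map_inv, mul_smul]
    exact Word.head?_toList_of_smul_of_smul hij.symm (inv_ne_one.2 (hd₁ k))
      (inv_ne_one.2 (hc₁ k)) (by rwa [inv_inv])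

end Monoid.CoprodI

namespace Monoid.Coprod

theorem injective_freeGroupLift_inl_mul_inr {G H κ : Type u} [Group G] [Group H] [Nontrivial κ]
    {c : κ → G} {d : κ → H} (hc : Injective c) (hd : Injective d) (hc₁ : ∀ k, c k ≠ 1)
    (hd₁ : ∀ k, d k ≠ 1) :
    Injective (FreeGroup.lift fun k => (inl (c k) * inr (d k) : Coprod G H)) := by
  let M : Bool → Type u := fun b => cond b H G
  let _ : ∀ b, Group (M b) := fun b => b.rec ‹Group G› ‹Group H›
  let φ : Coprod G H →* CoprodI M :=
    lift (CoprodI.of (M := M) (i := false)) (CoprodI.of (M := M) (i := true))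
  have hφ : φ.comp (FreeGroup.lift fun k => inl (c k) * inr (d k)) =
      FreeGroup.lift fun k =>
        CoprodI.of (M := M) (i := false) (c k) * CoprodI.of (i := true) (d k) :=
    FreeGroup.ext_hom _ _ fun k => by simp [φ]
  refine Injective.of_comp (f := φ) ?_
  rw [← MonoidHom.coe_comp, hφ]
  exact CoprodI.injective_freeGroupLift_of_mul_of Bool.false_ne_true hc hd hc₁ hd₁

end Monoid.Coprod

theorem ENat.three_le_card_of_three_le_natCard_or_infinite {α : Type*}
    (h : 3 ≤ Nat.card α ∨ Infinite α) : 3 ≤ ENat.card α := by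
  rcases h with h | h
  · have : Finite α := Nat.finite_of_card_ne_zero (by omega)
    rw [ENat.card_eq_coe_natCard]
    exact_mod_cast h
  · simp

/-- If `G` is a group of order at least 3 (possibly infinite), then the free
product `G * G` contains a free subgroup of rank two. -/
theorem stmt5 (G : Type) [Group G] (hG : 3 ≤ Nat.card G ∨ Infinite G) :
    ∃ H : Subgroup (Monoid.Coprod G G), Nonempty (H ≃* FreeGroup (Fin 2)) := by
  have hG₃ := ENat.three_le_card_of_three_le_natCard_or_infinite hG
  obtain ⟨g, hg, -⟩ := ENat.exists_ne_ne_of_three_le hG₃ 1 1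
  obtain ⟨h, hh, hhg⟩ := ENat.exists_ne_ne_of_three_le hG₃ 1 g
  have hc : Injective ![g, h] := injective_pair_iff_ne.2 hhg.symm
  have hc₁ : ∀ k, ![g, h] k ≠ 1 := Fin.forall_fin_two.2 ⟨hg, hh⟩
  exact ⟨_, ⟨(MonoidHom.ofInjective
    (Coprod.injective_freeGroupLift_inl_mul_inr hc hc hc₁ hc₁)).symm⟩⟩
end

section
/- With notation as above, define τ_z = g^{n_z} h^{m_{z−1}} g^{n_{z−1}} ⋯ h^{m_1} g^{n_1} for nonzero n_1,…,n_z, m_1,…,m_z ∈ k. Then τ_z(x_1) = d_0 + d_1 x_1 + d_2 x_2 + (∏_{s=1}^{z−1} m_s)(∏_{s=1}^{z} n_s) a_1 (b_1 a_1)^{z−1} x_2, where d_0, d_1, d_2 ∈ R, with d_1 = Σ_{s=0}^{z−1} α_s (a_1 b_1)^s and d_2 = Σ_{s=0}^{z−2} β_s a_1 (b_1 a_1)^s for scalars α_s, β_s in the subring of k generated by n_1,…,n_z, m_1,…,m_z. -/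
noncomputable section

/-- The composite automorphism `τ_z = g^{n_z} h^{m_{z−1}} g^{n_{z−1}} ⋯ h^{m_1} g^{n_1}`. -/
def tauSeq {k A : Type} [CommRing k] [Ring A] [Algebra k A]
    (g h : k → (A ≃ₐ[k] A)) (nn mm : ℕ → k) : ℕ → (A ≃ₐ[k] A)
  | 0 => 1
  | z + 1 => g (nn (z + 1)) * (if z = 0 then 1 else h (mm z)) * tauSeq g h nn mm z

private lemma pow_mul_swap {A : Type} [Ring A] (a b : A) (s : ℕ) :
    (a * b) ^ s * a = a * (b * a) ^ s := by
  induction s with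
  | zero => simp
  | succ s ih =>
    rw [pow_succ, pow_succ, mul_assoc ((a*b)^s) (a*b) a, mul_assoc a b a,
      ← mul_assoc ((a*b)^s) a (b*a), ih, mul_assoc]

private lemma sum_if_lt {M : Type*} [AddCommMonoid M] (N Z : ℕ) (h : N ≤ Z) (f : ℕ → M) :
    (∑ s ∈ Finset.range Z, if s < N then f s else 0) = ∑ s ∈ Finset.range N, f s := by
  rw [← Finset.sum_subset (Finset.range_subset_range.mpr h)
      (fun x _ hx => if_neg (by simpa using hx))]
  exact Finset.sum_congr rfl fun s hs => if_pos (Finset.mem_range.mp hs)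

private lemma sum_shift {M : Type*} [AddCommMonoid M] (N Z : ℕ) (h : N ≤ Z) (c : ℕ → M) :
    (∑ s ∈ Finset.range (Z+1), if 1 ≤ s then (if s - 1 < N then c s else 0) else 0)
      = ∑ s ∈ Finset.range N, c (s+1) := by
  rw [Finset.sum_range_succ']
  have h0 : (if 1 ≤ 0 then (if 0 - 1 < N then c 0 else 0) else 0) = (0 : M) := if_neg (by omega)
  have h1 : ∀ s : ℕ, (if 1 ≤ s+1 then (if s+1-1 < N then c (s+1) else 0) else 0)
      = if s < N then c (s+1) else 0 := by
    intro s
    rw [if_pos (by omega : 1 ≤ s + 1)]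
    simp
  simp only [h0, h1, add_zero]
  exact sum_if_lt N Z h _

private lemma sum_shift' {M : Type*} [AddCommMonoid M] (N Z : ℕ) (hZ : 1 ≤ Z) (h : N ≤ Z - 1)
    (c : ℕ → M) :
    (∑ s ∈ Finset.range Z, if 1 ≤ s then (if s - 1 < N then c s else 0) else 0)
      = ∑ s ∈ Finset.range N, c (s+1) := by
  obtain ⟨W, rfl⟩ : ∃ W, Z = W + 1 := ⟨Z - 1, by omega⟩
  exact sum_shift N W (by omega) c

/-- `τ_z(x_1) = d_0 + d_1 x_1 + d_2 x_2 + (∏ m_s)(∏ n_s) a_1 (b_1 a_1)^{z−1} x_2`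
with `d_0, d_1, d_2 ∈ R`, `d_1 = Σ α_s (a_1 b_1)^s`, `d_2 = Σ β_s a_1 (b_1 a_1)^s`,
where the `α_s, β_s` lie in the subring of `k` generated by the `n_s` and `m_s`.
(Generators indexed `x_0, …, x_{t-1}`.) -/
theorem stmt9 (k A : Type) [CommRing k] [IsDomain k] [Ring A] [Algebra k A]
    (t : ℕ) (ht : 3 ≤ t) (x : ℕ → A)
    (hgen : Algebra.adjoin k (x '' {i | i < t}) = ⊤)
    (a0 a1 b0 b1 : A)
    (hmem : ∀ c ∈ ({a0, a1, b0, b1} : Set A),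
      c ∈ Algebra.adjoin k (x '' {i | 2 ≤ i ∧ i < t}))
    (g h : k → (A ≃ₐ[k] A))
    (hg : ∀ n : k, (g n) (x 0) = x 0 + n • a0 + n • (a1 * x 1) ∧
      ∀ i, i ≠ 0 → (g n) (x i) = x i)
    (hh : ∀ m : k, (h m) (x 1) = x 1 + m • b0 + m • (b1 * x 0) ∧
      ∀ i, i ≠ 1 → (h m) (x i) = x i)
    (z : ℕ) (hz : 1 ≤ z) (nn mm : ℕ → k)
    (hnn : ∀ s, 1 ≤ s → s ≤ z → nn s ≠ 0)
    (hmm : ∀ s, 1 ≤ s → s ≤ z → mm s ≠ 0) :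
    ∃ d0 d1 d2 : A, ∃ α β : ℕ → k,
      d0 ∈ Algebra.adjoin k (x '' {i | 2 ≤ i ∧ i < t}) ∧
      d1 ∈ Algebra.adjoin k (x '' {i | 2 ≤ i ∧ i < t}) ∧
      d2 ∈ Algebra.adjoin k (x '' {i | 2 ≤ i ∧ i < t}) ∧
      (∀ s, α s ∈ Subring.closure
        ((nn '' {i | 1 ≤ i ∧ i ≤ z}) ∪ (mm '' {i | 1 ≤ i ∧ i ≤ z}))) ∧
      (∀ s, β s ∈ Subring.closure
        ((nn '' {i | 1 ≤ i ∧ i ≤ z}) ∪ (mm '' {i | 1 ≤ i ∧ i ≤ z}))) ∧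
      (tauSeq g h nn mm z) (x 0) =
        d0 + d1 * x 0 + d2 * x 1 +
          ((∏ s ∈ Finset.range (z - 1), mm (s + 1)) *
            (∏ s ∈ Finset.range z, nn (s + 1))) •
            (a1 * (b1 * a1) ^ (z - 1) * x 1) ∧
      d1 = ∑ s ∈ Finset.range z, α s • (a1 * b1) ^ s ∧
      d2 = ∑ s ∈ Finset.range (z - 1), β s • (a1 * (b1 * a1) ^ s) := by
  clear hnn hmm hgen ht
  have ha0 : a0 ∈ Algebra.adjoin k (x '' {i | 2 ≤ i ∧ i < t}) := hmem a0 (by simp)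
  have ha1 : a1 ∈ Algebra.adjoin k (x '' {i | 2 ≤ i ∧ i < t}) := hmem a1 (by simp)
  have hb0 : b0 ∈ Algebra.adjoin k (x '' {i | 2 ≤ i ∧ i < t}) := hmem b0 (by simp)
  have hb1 : b1 ∈ Algebra.adjoin k (x '' {i | 2 ≤ i ∧ i < t}) := hmem b1 (by simp)
  have fix : ∀ (f : A ≃ₐ[k] A), (∀ i, 2 ≤ i → f (x i) = x i) →
      ∀ r ∈ Algebra.adjoin k (x '' {i | 2 ≤ i ∧ i < t}), f r = r := by
    intro f hf r hr
    induction hr using Algebra.adjoin_induction with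
    | mem y hy => obtain ⟨i, ⟨h2, _⟩, rfl⟩ := hy; exact hf i h2
    | algebraMap r => exact f.commutes r
    | add u v hu hv pu pv => rw [map_add, pu, pv]
    | mul u v hu hv pu pv => rw [map_mul, pu, pv]
  have fixg : ∀ (c : k) (r : A), r ∈ Algebra.adjoin k (x '' {i | 2 ≤ i ∧ i < t}) →
      (g c) r = r := fun c => fix (g c) (fun i hi => (hg c).2 i (by omega))
  have fixh : ∀ (c : k) (r : A), r ∈ Algebra.adjoin k (x '' {i | 2 ≤ i ∧ i < t}) →
      (h c) r = r := fun c => fix (h c) (fun i hi => (hh c).2 i (by omega))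
  induction z, hz using Nat.le_induction with
  | base =>
    have h1 : tauSeq g h nn mm 1 = g (nn 1) := by
      rw [show tauSeq g h nn mm 1
          = g (nn 1) * (if (0:ℕ) = 0 then 1 else h (mm 0)) * tauSeq g h nn mm 0 from rfl,
        show tauSeq g h nn mm 0 = 1 from rfl]
      simp
    refine ⟨nn 1 • a0, 1, 0, fun _ => 1, fun _ => 0,
      Subalgebra.smul_mem _ ha0 _, one_mem _, zero_mem _,
      fun _ => one_mem _, fun _ => zero_mem _, ?_, by simp, by simp⟩
    rw [h1, (hg (nn 1)).1]
    simp only [Finset.prod_range_zero, Finset.prod_range_one, one_mul, Nat.sub_self,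
      pow_zero, mul_one, zero_mul, add_zero, one_smul]
    abel
  | succ z hz ih =>
    obtain ⟨d0, d1, d2, α, β, hd0, hd1, hd2, hα, hβ, heq, hsum1, hsum2⟩ := ih
    have hz1 : z - 1 + 1 = z := by omega
    simp only [Nat.add_sub_cancel]
    have hprodm : (∏ s ∈ Finset.range z, mm (s + 1))
        = (∏ s ∈ Finset.range (z-1), mm (s + 1)) * mm z := by
      conv_lhs => rw [← hz1, Finset.prod_range_succ]
      rw [hz1]
    rw [hprodm, Finset.prod_range_succ]
    set Pm := ∏ s ∈ Finset.range (z-1), mm (s + 1) with hPm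
    set Pn := ∏ s ∈ Finset.range z, nn (s + 1) with hPn
    set Y := a1 * (b1 * a1) ^ (z - 1) with hY
    have hYR : Y ∈ Algebra.adjoin k (x '' {i | 2 ≤ i ∧ i < t}) := by
      rw [hY]; exact mul_mem ha1 (pow_mem (mul_mem hb1 ha1) _)
    have hSle : Subring.closure ((nn '' {i | 1 ≤ i ∧ i ≤ z}) ∪ (mm '' {i | 1 ≤ i ∧ i ≤ z}))
        ≤ Subring.closure
          ((nn '' {i | 1 ≤ i ∧ i ≤ z+1}) ∪ (mm '' {i | 1 ≤ i ∧ i ≤ z+1})) :=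
      by
        have hsub : {i : ℕ | 1 ≤ i ∧ i ≤ z} ⊆ {i : ℕ | 1 ≤ i ∧ i ≤ z+1} :=
          by intro i hi
             simp only [Set.mem_setOf_eq] at hi ⊢
             omega
        exact Subring.closure_mono (Set.union_subset_union
          (Set.image_mono hsub) (Set.image_mono hsub))
    have hmS : mm z ∈ Subring.closure
        ((nn '' {i | 1 ≤ i ∧ i ≤ z+1}) ∪ (mm '' {i | 1 ≤ i ∧ i ≤ z+1})) :=
      Subring.subset_closure (Or.inr ⟨z, ⟨hz, by omega⟩, rfl⟩)
    have hnS : nn (z+1) ∈ Subring.closure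
        ((nn '' {i | 1 ≤ i ∧ i ≤ z+1}) ∪ (mm '' {i | 1 ≤ i ∧ i ≤ z+1})) :=
      Subring.subset_closure (Or.inl ⟨z+1, ⟨by omega, le_refl _⟩, rfl⟩)
    have hPmS : Pm ∈ Subring.closure
        ((nn '' {i | 1 ≤ i ∧ i ≤ z+1}) ∪ (mm '' {i | 1 ≤ i ∧ i ≤ z+1})) := by
      rw [hPm]
      exact Subring.prod_mem _ (fun s hs => Subring.subset_closure
        (Or.inr ⟨s+1, ⟨by omega, by have := Finset.mem_range.mp hs; omega⟩, rfl⟩))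
    have hPnS : Pn ∈ Subring.closure
        ((nn '' {i | 1 ≤ i ∧ i ≤ z+1}) ∪ (mm '' {i | 1 ≤ i ∧ i ≤ z+1})) := by
      rw [hPn]
      exact Subring.prod_mem _ (fun s hs => Subring.subset_closure
        (Or.inl ⟨s+1, ⟨by omega, by have := Finset.mem_range.mp hs; omega⟩, rfl⟩))
    have key1 : ∀ s : ℕ, (a1 * (b1 * a1) ^ s) * b1 = (a1 * b1) ^ (s+1) := by
      intro s
      rw [← pow_mul_swap, mul_assoc, ← pow_succ]
    have key3 : ∀ s : ℕ, (a1 * (b1 * a1) ^ s) * (b1 * a1) = a1 * (b1 * a1) ^ (s+1) := by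
      intro s
      rw [mul_assoc, ← pow_succ]
    have hτ : tauSeq g h nn mm (z+1) (x 0)
        = (g (nn (z+1))) ((h (mm z)) ((tauSeq g h nn mm z) (x 0))) := by
      rw [show tauSeq g h nn mm (z+1)
          = g (nn (z+1)) * (if z = 0 then 1 else h (mm z)) * tauSeq g h nn mm z from rfl,
        if_neg (by omega : ¬ z = 0)]
      simp [AlgEquiv.mul_apply]
    have hhx0 : (h (mm z)) (x 0) = x 0 := (hh (mm z)).2 0 (by omega)
    have hhx1 := (hh (mm z)).1
    have hgx1 : (g (nn (z+1))) (x 1) = x 1 := (hg (nn (z+1))).2 1 (by omega)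
    have hgx0 := (hg (nn (z+1))).1
    refine ⟨d0 + nn (z+1) • (d1 * a0) + mm z • (d2 * b0)
        + (mm z * nn (z+1)) • (d2 * (b1 * a0))
        + (mm z * (Pm * Pn)) • (Y * b0)
        + (mm z * nn (z+1) * (Pm * Pn)) • (Y * (b1 * a0)),
      d1 + mm z • (d2 * b1) + (mm z * (Pm * Pn)) • (Y * b1),
      nn (z+1) • (d1 * a1) + d2 + (mm z * nn (z+1)) • (d2 * (b1 * a1)) + (Pm * Pn) • Y,
      fun s => (if s < z then α s else 0)
        + (if 1 ≤ s then (if s - 1 < z - 1 then mm z * β (s-1) else 0) else 0)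
        + (if s = z then mm z * (Pm * Pn) else 0),
      fun s => (if s < z then nn (z+1) * α s else 0)
        + (if s < z - 1 then β s else 0)
        + (if 1 ≤ s then (if s - 1 < z - 1 then mm z * nn (z+1) * β (s-1) else 0) else 0)
        + (if s = z - 1 then Pm * Pn else 0),
      ?_, ?_, ?_, ?_, ?_, ?_, ?_, ?_⟩
    · exact add_mem (add_mem (add_mem (add_mem (add_mem hd0
        (Subalgebra.smul_mem _ (mul_mem hd1 ha0) _))
        (Subalgebra.smul_mem _ (mul_mem hd2 hb0) _))
        (Subalgebra.smul_mem _ (mul_mem hd2 (mul_mem hb1 ha0)) _))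
        (Subalgebra.smul_mem _ (mul_mem hYR hb0) _))
        (Subalgebra.smul_mem _ (mul_mem hYR (mul_mem hb1 ha0)) _)
    · exact add_mem (add_mem hd1 (Subalgebra.smul_mem _ (mul_mem hd2 hb1) _))
        (Subalgebra.smul_mem _ (mul_mem hYR hb1) _)
    · exact add_mem (add_mem (add_mem (Subalgebra.smul_mem _ (mul_mem hd1 ha1) _) hd2)
        (Subalgebra.smul_mem _ (mul_mem hd2 (mul_mem hb1 ha1)) _))
        (Subalgebra.smul_mem _ hYR _)
    · intro s
      refine add_mem (add_mem ?_ ?_) ?_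
      · split_ifs with hc
        · exact hSle (hα s)
        · exact zero_mem _
      · split_ifs with hc1 hc2
        · exact mul_mem hmS (hSle (hβ (s-1)))
        · exact zero_mem _
        · exact zero_mem _
      · split_ifs with hc
        · exact mul_mem hmS (mul_mem hPmS hPnS)
        · exact zero_mem _
    · intro s
      refine add_mem (add_mem (add_mem ?_ ?_) ?_) ?_
      · split_ifs with hc
        · exact mul_mem hnS (hSle (hα s))
        · exact zero_mem _
      · split_ifs with hc
        · exact hSle (hβ s)
        · exact zero_mem _
      · split_ifs with hc1 hc2
        · exact mul_mem (mul_mem hmS hnS) (hSle (hβ (s-1)))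
        · exact zero_mem _
        · exact zero_mem _
      · split_ifs with hc
        · exact mul_mem hPmS hPnS
        · exact zero_mem _
    · -- main equation
      rw [hτ, heq]
      simp only [map_add, map_mul, map_smul,
        fixh (mm z) d0 hd0, fixh (mm z) d1 hd1, fixh (mm z) d2 hd2, fixh (mm z) Y hYR,
        hhx0, hhx1,
        fixg (nn (z+1)) d0 hd0, fixg (nn (z+1)) d1 hd1, fixg (nn (z+1)) d2 hd2,
        fixg (nn (z+1)) Y hYR, fixg (nn (z+1)) b0 hb0, fixg (nn (z+1)) b1 hb1,
        hgx0, hgx1]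
      have htop : a1 * (b1 * a1) ^ z * x 1 = Y * (b1 * (a1 * x 1)) := by
        have hp : (b1 * a1) ^ z = (b1 * a1) ^ (z-1) * (b1 * a1) := by
          conv_lhs => rw [← hz1]
          rw [pow_succ]
        rw [hp, hY]
        noncomm_ring
      rw [htop]
      simp only [mul_add, add_mul, smul_add, smul_mul_assoc, mul_smul_comm, smul_smul,
        mul_assoc]
      module
    · -- d1 sum
      simp only [add_smul, ite_smul, zero_smul, Finset.sum_add_distrib]
      rw [sum_if_lt z (z+1) (by omega), ← hsum1,
        sum_shift' (z-1) (z+1) (by omega) (by omega), Finset.sum_ite_eq']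
      rw [if_pos (Finset.mem_range.mpr (by omega : z < z + 1))]
      have hYb1 : Y * b1 = (a1 * b1) ^ z := by
        rw [hY, key1 (z-1), hz1]
      rw [hYb1, hsum2, Finset.sum_mul, Finset.smul_sum]
      simp only [smul_mul_assoc, smul_smul, key1, Nat.add_sub_cancel]
    · -- d2 sum
      simp only [add_smul, ite_smul, zero_smul, Finset.sum_add_distrib]
      rw [sum_if_lt z z (le_refl z), sum_if_lt (z-1) z (by omega),
        sum_shift' (z-1) z (by omega) (by omega), Finset.sum_ite_eq']
      rw [if_pos (Finset.mem_range.mpr (by omega : z - 1 < z))]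
      rw [← hsum2, hY]
      conv_lhs => rw [hsum1, hsum2]
      rw [Finset.sum_mul, Finset.sum_mul, Finset.smul_sum, Finset.smul_sum]
      simp only [smul_mul_assoc, smul_smul, pow_mul_swap, key3, Nat.add_sub_cancel]
      rw [hsum2]
end
end

section
/- Retain the setting of the automorphisms g^n, h^m (n, m ∈ k) of the algebra A. Assume R + R x_1 + R x_2 is a free left R-module with basis {1, x_1, x_2}, and that a_1 b_1 ∈ A is transcendental over a subring k_0 ⊆ k. Then for nonzero m_1,…,m_z, n_1,…,n_z ∈ k_0, neither σ_z = h^{m_z} g^{n_z} ⋯ h^{m_1} g^{n_1} nor τ_z = g^{n_z} h^{m_{z−1}} ⋯ h^{m_1} g^{n_1} is the identity automorphism of A. -/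
noncomputable section

/-- If `R + R x_1 + R x_2` is a free left `R`-module with basis `{1, x_1, x_2}` and
`a_1 b_1` is transcendental over a subring `k_0 ⊆ k`, then for nonzero
`m_1, …, m_z, n_1, …, n_z ∈ k_0`, neither `σ_z = h^{m_z} τ_z` nor `τ_z` is the
identity automorphism.  (Generators indexed `x_0, …, x_{t-1}`.) -/
theorem stmt10 (k A : Type) [CommRing k] [IsDomain k] [Ring A] [Algebra k A]
    (t : ℕ) (ht : 3 ≤ t) (x : ℕ → A)
    (hgen : Algebra.adjoin k (x '' {i | i < t}) = ⊤)
    (a0 a1 b0 b1 : A)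
    (hmem : ∀ c ∈ ({a0, a1, b0, b1} : Set A),
      c ∈ Algebra.adjoin k (x '' {i | 2 ≤ i ∧ i < t}))
    (g h : k → (A ≃ₐ[k] A))
    (hg : ∀ n : k, (g n) (x 0) = x 0 + n • a0 + n • (a1 * x 1) ∧
      ∀ i, i ≠ 0 → (g n) (x i) = x i)
    (hh : ∀ m : k, (h m) (x 1) = x 1 + m • b0 + m • (b1 * x 0) ∧
      ∀ i, i ≠ 1 → (h m) (x i) = x i)
    -- `R + R x_1 + R x_2` is a free left `R`-module with basis `{1, x_1, x_2}`:
    (hfree : ∀ r0 r1 r2 : A,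
      r0 ∈ Algebra.adjoin k (x '' {i | 2 ≤ i ∧ i < t}) →
      r1 ∈ Algebra.adjoin k (x '' {i | 2 ≤ i ∧ i < t}) →
      r2 ∈ Algebra.adjoin k (x '' {i | 2 ≤ i ∧ i < t}) →
      r0 + r1 * x 0 + r2 * x 1 = 0 → r0 = 0 ∧ r1 = 0 ∧ r2 = 0)
    (k0 : Subring k)
    -- `a_1 b_1` is transcendental over `k_0`:
    (htr : ∀ (N : ℕ) (c : ℕ → k), (∀ i, c i ∈ k0) → c N ≠ 0 →
      ∑ i ∈ Finset.range (N + 1), c i • (a1 * b1) ^ i ≠ 0)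
    (z : ℕ) (hz : 1 ≤ z) (nn mm : ℕ → k)
    (hnn : ∀ s, 1 ≤ s → s ≤ z → nn s ∈ k0 ∧ nn s ≠ 0)
    (hmm : ∀ s, 1 ≤ s → s ≤ z → mm s ∈ k0 ∧ mm s ≠ 0) :
    h (mm z) * tauSeq g h nn mm z ≠ 1 ∧ tauSeq g h nn mm z ≠ 1 := by
  classical
  set S := Algebra.adjoin k (x '' {i | 2 ≤ i ∧ i < t}) with hSdef
  have ha0 : a0 ∈ S := hmem a0 (by simp)
  have ha1 : a1 ∈ S := hmem a1 (by simp)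
  have hb0 : b0 ∈ S := hmem b0 (by simp)
  have hb1 : b1 ∈ S := hmem b1 (by simp)
  set u : A := a1 * b1 with hudef
  have hu : u ∈ S := S.mul_mem ha1 hb1
  -- any algebra equiv fixing the generators x_i (i ≥ 2) fixes S pointwise
  have hfix : ∀ (φ : A ≃ₐ[k] A), (∀ i, 2 ≤ i → φ (x i) = x i) → ∀ s ∈ S, φ s = s := by
    intro φ hφ s hs
    induction hs using Algebra.adjoin_induction with
    | mem y hy =>
      obtain ⟨i, hi, rfl⟩ := hy
      exact hφ i hi.1
    | algebraMap r => exact φ.commutes r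
    | add p q hp hq ihp ihq => rw [map_add, ihp, ihq]
    | mul p q hp hq ihp ihq => rw [map_mul, ihp, ihq]
  have hgfix : ∀ n, ∀ s ∈ S, g n s = s := fun n =>
    hfix (g n) (fun i hi => (hg n).2 i (by omega))
  have hhfix : ∀ m, ∀ s ∈ S, h m s = s := fun m =>
    hfix (h m) (fun i hi => (hh m).2 i (by omega))
  have haev : ∀ P : Polynomial k, Polynomial.aeval u P ∈ S := by
    intro P
    have h1 : Algebra.adjoin k ({u} : Set A) ≤ S :=
      Algebra.adjoin_le (by simpa using hu)
    exact h1 (Polynomial.aeval_mem_adjoin_singleton k u)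
  -- commutation of u with aeval values
  have hcomm : ∀ P : Polynomial k, u * Polynomial.aeval u P = Polynomial.aeval u P * u := by
    intro P
    have h1 : Polynomial.aeval u (Polynomial.X * P) = Polynomial.aeval u (P * Polynomial.X) := by
      rw [mul_comm]
    simpa [map_mul] using h1
  -- action of h m on elements of the form r0 + PA * x0 + (QA * a1) * x1
  have hhapp : ∀ (m : k) (r0 PA QA : A), r0 ∈ S → PA ∈ S → QA ∈ S →
      h m (r0 + PA * x 0 + (QA * a1) * x 1)
        = (r0 + m • (QA * a1 * b0)) + (PA + m • (QA * (a1 * b1))) * x 0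
          + (QA * a1) * x 1 := by
    intro m r0 PA QA h0 h1 h2
    rw [map_add, map_add, map_mul, map_mul, hhfix m r0 h0, hhfix m PA h1,
      hhfix m (QA * a1) (S.mul_mem h2 ha1), (hh m).1, (hh m).2 0 (by decide)]
    simp only [mul_add, add_mul, mul_smul_comm, smul_mul_assoc, mul_assoc]
    abel
  -- action of g n on elements of the form r0 + PA * x0 + QB * x1
  have hgapp : ∀ (n : k) (r0 PA QB : A), r0 ∈ S → PA ∈ S → QB ∈ S →
      g n (r0 + PA * x 0 + QB * x 1)
        = (r0 + n • (PA * a0)) + PA * x 0 + (QB + n • (PA * a1)) * x 1 := by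
    intro n r0 PA QB h0 h1 h2
    rw [map_add, map_add, map_mul, map_mul, hgfix n r0 h0, hgfix n PA h1,
      hgfix n QB h2, (hg n).1, (hg n).2 1 (by decide)]
    simp only [mul_add, add_mul, mul_smul_comm, smul_mul_assoc, mul_assoc]
    abel
  -- main invariant by induction
  have key : ∀ w, 1 ≤ w → w ≤ z → ∃ (r0 : A) (P Q : Polynomial k),
      r0 ∈ S ∧ (∀ i, P.coeff i ∈ k0) ∧ (∀ i, Q.coeff i ∈ k0) ∧
      (∀ i, w ≤ i → P.coeff i = 0) ∧ (∀ i, w ≤ i → Q.coeff i = 0) ∧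
      Q.coeff (w - 1) ≠ 0 ∧
      tauSeq g h nn mm w (x 0)
        = r0 + (Polynomial.aeval u P) * x 0 + ((Polynomial.aeval u Q) * a1) * x 1 := by
    intro w
    induction w with
    | zero => omega
    | succ w ih =>
      intro _ hwz
      rcases Nat.eq_zero_or_pos w with hw0 | hwpos
      · -- base case w + 1 = 1
        subst hw0
        refine ⟨nn 1 • a0, 1, Polynomial.C (nn 1), S.smul_mem ha0 _, ?_, ?_, ?_, ?_, ?_, ?_⟩
        · intro i
          rcases Nat.eq_zero_or_pos i with rfl | hi
          · simpa using one_mem k0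
          · simpa [Polynomial.coeff_one, Nat.pos_iff_ne_zero.mp hi] using zero_mem k0
        · intro i
          rcases Nat.eq_zero_or_pos i with rfl | hi
          · simpa using (hnn 1 le_rfl hz).1
          · simpa [Polynomial.coeff_C, Nat.pos_iff_ne_zero.mp hi] using zero_mem k0
        · intro i hi
          simp [Polynomial.coeff_one, Nat.one_le_iff_ne_zero.mp hi]
        · intro i hi
          simp [Polynomial.coeff_C, Nat.one_le_iff_ne_zero.mp hi]
        · simpa using (hnn 1 le_rfl hz).2
        · have ht1 : tauSeq g h nn mm 1 = g (nn 1) := by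
            show g (nn 1) * (if (0:ℕ) = 0 then 1 else h (mm 0)) * tauSeq g h nn mm 0 = _
            simp [tauSeq]
          rw [ht1, (hg (nn 1)).1, map_one, Polynomial.aeval_C, one_mul]
          simp only [Algebra.smul_def, mul_assoc]
          abel
      · -- inductive step
        obtain ⟨r0, P, Q, hr0, hPk, hQk, hPb, hQb, hQl, heq⟩ := ih hwpos (by omega)
        set P' : Polynomial k := P + Polynomial.C (mm w) * (Polynomial.X * Q) with hP'def
        set Q' : Polynomial k := Q + Polynomial.C (nn (w+1)) * P' with hQ'def
        have hP'c : ∀ i, P'.coeff i = P.coeff i + mm w * (Polynomial.X * Q).coeff i := by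
          intro i; simp [hP'def]
        have hXQ : ∀ i, (Polynomial.X * Q).coeff i = if i = 0 then 0 else Q.coeff (i-1) := by
          intro i
          rcases Nat.eq_zero_or_pos i with rfl | hi
          · simp [Polynomial.mul_coeff_zero]
          · obtain ⟨j, rfl⟩ := Nat.exists_eq_succ_of_ne_zero (Nat.pos_iff_ne_zero.mp hi)
            simp [Polynomial.coeff_X_mul]
        have hP'k : ∀ i, P'.coeff i ∈ k0 := by
          intro i
          rw [hP'c, hXQ]
          refine add_mem (hPk i) ?_
          split
          · simpa using zero_mem k0
          · exact mul_mem (hmm w hwpos (by omega)).1 (hQk _)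
        have hP'b : ∀ i, w + 1 ≤ i → P'.coeff i = 0 := by
          intro i hi
          rw [hP'c, hXQ, hPb i (by omega), if_neg (by omega), hQb (i-1) (by omega)]
          simp
        have hQ'c : ∀ i, Q'.coeff i = Q.coeff i + nn (w+1) * P'.coeff i := by
          intro i; simp [hQ'def]
        have hQ'k : ∀ i, Q'.coeff i ∈ k0 := fun i => by
          rw [hQ'c]
          exact add_mem (hQk i) (mul_mem (hnn (w+1) (by omega) hwz).1 (hP'k i))
        have hQ'b : ∀ i, w + 1 ≤ i → Q'.coeff i = 0 := by
          intro i hi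
          rw [hQ'c, hQb i (by omega), hP'b i hi]
          simp
        have hQ'l : Q'.coeff (w + 1 - 1) ≠ 0 := by
          have e1 : Q'.coeff w = nn (w+1) * (mm w * Q.coeff (w-1)) := by
            rw [hQ'c, hQb w le_rfl, hP'c, hXQ, hPb w le_rfl, if_neg (by omega)]
            ring
          rw [Nat.add_sub_cancel, e1]
          exact mul_ne_zero (hnn (w+1) (by omega) hwz).2
            (mul_ne_zero (hmm w hwpos (by omega)).2 hQl)
        have hP'ev : Polynomial.aeval u P'
            = Polynomial.aeval u P + mm w • (Polynomial.aeval u Q * (a1 * b1)) := by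
          rw [hP'def, map_add, map_mul, map_mul, Polynomial.aeval_C, Polynomial.aeval_X,
            Algebra.smul_def, hcomm Q, ← hudef]
        have hQ'ev : Polynomial.aeval u Q'
            = Polynomial.aeval u Q + nn (w+1) • Polynomial.aeval u P' := by
          rw [hQ'def, map_add, map_mul, Polynomial.aeval_C, Algebra.smul_def]
        refine ⟨(r0 + mm w • (Polynomial.aeval u Q * a1 * b0))
            + nn (w+1) • (Polynomial.aeval u P' * a0), P', Q', ?_, hP'k, hQ'k, hP'b, hQ'b,
            hQ'l, ?_⟩
        · exact S.add_mem
            (S.add_mem hr0 (S.smul_mem (S.mul_mem (S.mul_mem (haev Q) ha1) hb0) _))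
            (S.smul_mem (S.mul_mem (haev P') ha0) _)
        · have hwne : w ≠ 0 := Nat.pos_iff_ne_zero.mp hwpos
          show (g (nn (w+1)) * (if w = 0 then 1 else h (mm w)) * tauSeq g h nn mm w) (x 0) = _
          rw [if_neg hwne, AlgEquiv.mul_apply, AlgEquiv.mul_apply, heq,
            hhapp (mm w) r0 (Polynomial.aeval u P) (Polynomial.aeval u Q) hr0 (haev P) (haev Q),
            ← hP'ev,
            hgapp (nn (w+1)) _ (Polynomial.aeval u P') (Polynomial.aeval u Q * a1)
              (S.add_mem hr0 (S.smul_mem (S.mul_mem (S.mul_mem (haev Q) ha1) hb0) _))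
              (haev P') (S.mul_mem (haev Q) ha1),
            hQ'ev]
          simp only [add_mul, smul_mul_assoc]
  -- the coefficient of x1 is nonzero
  have hQa1 : ∀ Q : Polynomial k, (∀ i, Q.coeff i ∈ k0) → (∀ i, z ≤ i → Q.coeff i = 0) →
      Q.coeff (z - 1) ≠ 0 → Polynomial.aeval u Q * a1 ≠ 0 := by
    intro Q hQk hQb hQl hcon
    have hQne : Q ≠ 0 := fun hQ0 => hQl (by simp [hQ0])
    have hdeg : Q.natDegree < z := by
      by_contra hd
      push_neg at hd
      exact Polynomial.leadingCoeff_ne_zero.mpr hQne (hQb _ hd)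
    have h1 : Polynomial.aeval u Q * u = 0 := by
      rw [hudef, ← mul_assoc, hcon, zero_mul]
    rw [Polynomial.aeval_eq_sum_range' hdeg, Finset.sum_mul] at h1
    set c : ℕ → k := fun i => if i = 0 then 0 else Q.coeff (i - 1) with hcdef
    have h2 : ∑ i ∈ Finset.range (z + 1), c i • (a1 * b1) ^ i = 0 := by
      rw [Finset.sum_range_succ']
      simp only [hcdef, if_pos rfl, zero_smul, add_zero]
      rw [← h1]
      refine Finset.sum_congr rfl fun i _ => ?_
      simp [smul_mul_assoc, pow_succ, hudef]
    refine htr z c ?_ ?_ h2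
    · intro i
      rcases Nat.eq_zero_or_pos i with rfl | hi
      · simpa [hcdef] using zero_mem k0
      · simpa [hcdef, Nat.pos_iff_ne_zero.mp hi] using hQk (i - 1)
    · simpa [hcdef, Nat.one_le_iff_ne_zero.mp hz] using hQl
  obtain ⟨r0, P, Q, hr0, hPk, hQk, hPb, hQb, hQl, heq⟩ := key z hz le_rfl
  have hQane : Polynomial.aeval u Q * a1 ≠ 0 := hQa1 Q hQk hQb hQl
  -- a common argument: if an automorphism sends x0 to r0' + PA*x0 + (aeval u Q * a1)*x1
  -- with r0', PA ∈ S, then it doesn't fix x0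
  have main : ∀ (r0' PA : A), r0' ∈ S → PA ∈ S →
      r0' + PA * x 0 + (Polynomial.aeval u Q * a1) * x 1 ≠ x 0 := by
    intro r0' PA h0 h1 hcon
    have h2 : r0' + (PA - 1) * x 0 + (Polynomial.aeval u Q * a1) * x 1
        = (r0' + PA * x 0 + (Polynomial.aeval u Q * a1) * x 1) - x 0 := by
      noncomm_ring
    rw [hcon, sub_self] at h2
    exact hQane (hfree r0' (PA - 1) (Polynomial.aeval u Q * a1) h0
      (S.sub_mem h1 S.one_mem) (S.mul_mem (haev Q) ha1) h2).2.2
  constructor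
  · intro hcon
    have h1 : (h (mm z) * tauSeq g h nn mm z) (x 0) = x 0 := by rw [hcon]; rfl
    rw [AlgEquiv.mul_apply, heq,
      hhapp (mm z) r0 (Polynomial.aeval u P) (Polynomial.aeval u Q) hr0 (haev P) (haev Q)] at h1
    exact main _ _ (S.add_mem hr0 (S.smul_mem (S.mul_mem (S.mul_mem (haev Q) ha1) hb0) _))
      (S.add_mem (haev P) (S.smul_mem (S.mul_mem (haev Q) (S.mul_mem ha1 hb1)) _)) h1
  · intro hcon
    have h1 : tauSeq g h nn mm z (x 0) = x 0 := by rw [hcon]; rfl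
    rw [heq] at h1
    exact main r0 (Polynomial.aeval u P) hr0 (haev P) h1
end
end

section
/- Let k be a field and n ≥ 4 even. Suppose a_ij ≠ 0 for all i < j, the projection G(A) → S_n is surjective, and k contains square roots of all its elements (e.g., k algebraically closed). Then V_n(A) is isomorphic to W_n; i.e., there exist units λ_1,…,λ_n and σ ∈ S_n with λ_i λ_j a_{σ(i)σ(j)} = 1 for all i ≠ j. -/
/-- Let `n ≥ 4` be even, `a_{ij} ≠ 0` for all `i < j`, suppose the projection
`G(𝒜) → S_n` is surjective, and suppose every element of `k` has a square root.
Then `V_n(𝒜) ≅ W_n`; i.e., there exist units `λ_1, …, λ_n` and `σ ∈ S_n` with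
`λ_i λ_j a_{σ(i)σ(j)} = 1` for all `i ≠ j`. -/
theorem stmt17 (k : Type) [Field k] (n : ℕ) (hn : 4 ≤ n) (heven : Even n)
    (a : Fin n → Fin n → k) (hsym : ∀ i j, a i j = a j i)
    (ha : ∀ i j, i ≠ j → a i j ≠ 0)
    (hsurj : ∀ σ : Equiv.Perm (Fin n), ∃ r : Fin n → kˣ,
      ∀ i j, i ≠ j → a i j = (r i : k) * (r j : k) * a (σ i) (σ j))
    (hsq : ∀ c : k, ∃ d : k, d ^ 2 = c) :
    ∃ (σ : Equiv.Perm (Fin n)) (lam : Fin n → kˣ),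
      ∀ i j, i ≠ j → (lam i : k) * (lam j : k) * a (σ i) (σ j) = 1 := by
  classical
  -- Cross identity
  have cross : ∀ p q r s : Fin n, p ≠ r → q ≠ s → q ≠ p → q ≠ r → s ≠ p → s ≠ r →
      a p q * a r s = a p s * a r q := by
    intro p q r s hpr hqs hqp hqr hsp hsr
    obtain ⟨rr, hrr⟩ := hsurj (Equiv.swap p r)
    have hq : Equiv.swap p r q = q := Equiv.swap_apply_of_ne_of_ne hqp hqr
    have hs : Equiv.swap p r s = s := Equiv.swap_apply_of_ne_of_ne hsp hsr
    have h1 : (rr q : k) * rr s = 1 := by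
      have h := hrr q s hqs
      rw [hq, hs] at h
      exact mul_right_cancel₀ (ha q s hqs)
        (show ((rr q : k) * rr s) * a q s = 1 * a q s by rw [one_mul]; exact h.symm)
    have h2 : (rr p : k) * rr r = 1 := by
      have h := hrr p r hpr
      rw [Equiv.swap_apply_left, Equiv.swap_apply_right, hsym r p] at h
      exact mul_right_cancel₀ (ha p r hpr)
        (show ((rr p : k) * rr r) * a p r = 1 * a p r by rw [one_mul]; exact h.symm)
    have hpq := hrr p q (Ne.symm hqp)
    rw [Equiv.swap_apply_left, hq] at hpq
    have hrs := hrr r s (Ne.symm hsr)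
    rw [Equiv.swap_apply_right, hs] at hrs
    rw [hpq, hrs]
    linear_combination ((rr p : k) * (rr r : k) * a r q * a p s) * h1 +
      (a r q * a p s) * h2
  set i0 : Fin n := ⟨0, by omega⟩ with hi0def
  set i1 : Fin n := ⟨1, by omega⟩ with hi1def
  set i2 : Fin n := ⟨2, by omega⟩ with hi2def
  have h1ne : i1 ≠ i0 := by simp [hi0def, hi1def, Fin.ext_iff]
  have h2ne : i2 ≠ i0 := by simp [hi0def, hi2def, Fin.ext_iff]
  have h12 : i1 ≠ i2 := by simp [hi1def, hi2def, Fin.ext_iff]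
  set q : Fin n → Fin n → k := fun i j => a i0 i * a i0 j / a i j with hqdef
  have qsymm : ∀ i j, q i j = q j i := by
    intro i j
    simp only [hqdef]
    rw [hsym i j]; ring
  have qadj : ∀ i j l : Fin n, i ≠ i0 → j ≠ i0 → l ≠ i0 → i ≠ j → i ≠ l → j ≠ l →
      q i j = q i l := by
    intro i j l hi hj hl hij hil hjl
    have hc := cross i0 j i l (Ne.symm hi) hjl hj (Ne.symm hij) hl (Ne.symm hil)
    simp only [hqdef]
    rw [div_eq_div_iff (ha i j hij) (ha i l hil)]
    linear_combination (a i0 i) * hc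
  have qeq : ∀ i j kk l : Fin n, i ≠ i0 → j ≠ i0 → kk ≠ i0 → l ≠ i0 → i ≠ j → kk ≠ l →
      q i j = q kk l := by
    intro i j kk l hi hj hk hl hij hkl
    by_cases hki : kk = i
    · subst hki
      by_cases hlj : l = j
      · subst hlj; rfl
      · exact qadj kk j l hi hj hl hij hkl (fun h => hlj h.symm)
    · by_cases hlj : l = j
      · subst hlj
        rw [qsymm i l, qsymm kk l]
        exact qadj l i kk hj hi hk (Ne.symm hij) (Ne.symm hkl) (fun h => hki h.symm)
      · by_cases hkj : kk = j
        · subst hkj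
          by_cases hli : l = i
          · subst hli
            exact qsymm l kk
          · rw [qsymm i kk]
            exact qadj kk i l hk hi hl (Ne.symm hij) hkl (fun h => hli h.symm)
        · by_cases hli : l = i
          · subst hli
            rw [qsymm kk l]
            exact qadj l j kk hi hj hk hij (Ne.symm hkl) (fun h => hkj h.symm)
          · have step1 : q i j = q i l :=
              qadj i j l hi hj hl hij (fun h => hli h.symm) (fun h => hlj h.symm)
            have step2 : q l i = q l kk :=
              qadj l i kk hl hi hk (fun h => hli h) (Ne.symm hkl) (fun h => hki h.symm)
            rw [step1, qsymm i l, step2, qsymm l kk]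
  have qprod : ∀ i j : Fin n, i ≠ i0 → j ≠ i0 → i ≠ j →
      a i0 i * a i0 j * a i1 i2 = a i0 i1 * a i0 i2 * a i j := by
    intro i j hi hj hij
    have h := qeq i j i1 i2 hi hj h1ne h2ne hij h12
    simp only [hqdef] at h
    exact (div_eq_div_iff (ha i j hij) (ha i1 i2 h12)).mp h
  obtain ⟨d, hd⟩ := hsq (a i0 i1 * a i0 i2 / a i1 i2)
  have hdne : d ≠ 0 := by
    intro h
    have hne : a i0 i1 * a i0 i2 / a i1 i2 ≠ 0 :=
      div_ne_zero (mul_ne_zero (ha i0 i1 (Ne.symm h1ne)) (ha i0 i2 (Ne.symm h2ne)))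
        (ha i1 i2 h12)
    apply hne
    rw [← hd, h]; ring
  have hdd : d * d * a i1 i2 = a i0 i1 * a i0 i2 := by
    have : d ^ 2 * a i1 i2 = (a i0 i1 * a i0 i2 / a i1 i2) * a i1 i2 := by rw [hd]
    rw [div_mul_cancel₀ _ (ha i1 i2 h12)] at this
    linear_combination this
  set ν : Fin n → k := fun i => if i = i0 then d else a i0 i / d with hνdef
  have hν0 : ∀ i, ν i ≠ 0 := by
    intro i
    simp only [hνdef]
    split_ifs with h
    · exact hdne
    · exact div_ne_zero (ha i0 i (fun hh => h hh.symm)) hdne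
  have hmain : ∀ i j, i ≠ j → a i j = ν i * ν j := by
    intro i j hij
    by_cases hi : i = i0
    · subst hi
      simp only [hνdef, if_pos rfl, if_neg (Ne.symm hij)]
      field_simp
    · by_cases hj : j = i0
      · subst hj
        simp only [hνdef, if_pos rfl, if_neg hi]
        rw [hsym i i0]
        field_simp
      · simp only [hνdef, if_neg hi, if_neg hj]
        have hp := qprod i j hi hj hij
        rw [div_mul_div_comm, eq_div_iff (mul_ne_zero hdne hdne)]
        apply mul_right_cancel₀ (ha i1 i2 h12)
        linear_combination (a i j) * hdd - hp
  refine ⟨Equiv.refl _, fun i => (Units.mk0 (ν i) (hν0 i))⁻¹, ?_⟩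
  intro i j hij
  simp only [Equiv.refl_apply]
  rw [hmain i j hij]
  have : ((Units.mk0 (ν i) (hν0 i))⁻¹ : kˣ) = Units.mk0 (ν i)⁻¹ (inv_ne_zero (hν0 i)) := by
    ext
    simp
  rw [this]
  have : ((Units.mk0 (ν j) (hν0 j))⁻¹ : kˣ) = Units.mk0 (ν j)⁻¹ (inv_ne_zero (hν0 j)) := by
    ext
    simp
  rw [this]
  simp only [Units.val_mk0]
  field_simp
  exact div_self (mul_ne_zero (hν0 i) (hν0 j))
end

section
/- Let n = 4 and suppose a_ij ≠ 0 for all i < j. Then the image of G(A) in S_4 contains the Klein four-group {id, (12)(34), (13)(24), (14)(23)}. -/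
/-!
Write `σ₀ = (01)(23)`. A rescaling `r` realises `σ₀` as soon as `r₀ r₁ = r₂ r₃ = 1`,
`r₀ r₂ = a₀₂ / a₁₃` and `r₀ r₃ = a₀₃ / a₁₂`; the conditions on the remaining pairs follow from
the symmetry of `a`. Multiplying the last two gives `r₀² = a₀₂ a₀₃ / (a₁₂ a₁₃)`, which is
solvable because square roots exist, and this determines `r`. The other two double
transpositions are conjugate to `σ₀`, and conjugating `σ` by `τ` corresponds to relabelling the
indices of `a` by `τ`.
-/

open Equiv

section

variable {ι k : Type*} [Field k]

/-- `σ` lies in the image of `G(a)` in the permutations of `ι`. -/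
def IsScaledSymmetry (a : ι → ι → k) (σ : Perm ι) : Prop :=
  ∃ r : ι → kˣ, ∀ i j, i ≠ j → a i j = r i * r j * a (σ i) (σ j)

theorem isScaledSymmetry_one (a : ι → ι → k) : IsScaledSymmetry a 1 :=
  ⟨1, fun _ _ _ => by simp⟩

theorem IsScaledSymmetry.of_comp {a : ι → ι → k} {σ : Perm ι} (τ : Perm ι)
    (h : IsScaledSymmetry (fun i j => a (τ i) (τ j)) σ) :
    IsScaledSymmetry a (τ * σ * τ⁻¹) := by
  obtain ⟨r, hr⟩ := h
  refine ⟨fun i => r (τ⁻¹ i), fun i j hij => ?_⟩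
  simpa using hr (τ⁻¹ i) (τ⁻¹ j) (by simpa using hij)

theorem isScaledSymmetry_swap_mul_swap {a : Fin 4 → Fin 4 → k} (hsym : ∀ i j, a i j = a j i)
    (ha : ∀ i j, i ≠ j → a i j ≠ 0) (hsq : ∀ c : k, ∃ d : k, d ^ 2 = c) :
    IsScaledSymmetry a (swap 0 1 * swap 2 3) := by
  have h02 := ha 0 2 (by decide)
  have h03 := ha 0 3 (by decide)
  have h12 := ha 1 2 (by decide)
  have h13 := ha 1 3 (by decide)
  obtain ⟨d, hd⟩ := hsq (a 0 2 * a 0 3 / (a 1 3 * a 1 2))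
  have hd0 : d ≠ 0 := by
    rintro rfl
    exact div_ne_zero (mul_ne_zero h02 h03) (mul_ne_zero h13 h12) (by simp [← hd])
  replace hd : d ^ 2 * (a 1 3 * a 1 2) = a 0 2 * a 0 3 := by
    rw [hd]; field_simp
  let r : Fin 4 → k := ![d, d⁻¹, a 0 2 / (a 1 3 * d), a 0 3 / (a 1 2 * d)]
  have hr : ∀ i, r i ≠ 0 := by
    intro i; fin_cases i <;> simp [r, *]
  refine ⟨fun i => Units.mk0 (r i) (hr i), fun i j hij => ?_⟩
  fin_cases i <;> fin_cases j <;>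
    simp [r, swap_apply_of_ne_of_ne, hsym 1 0, hsym 2 0, hsym 3 0, hsym 2 1, hsym 3 1, hsym 3 2]
      at hij ⊢ <;>
    field_simp <;>
    first | linear_combination hd | linear_combination a 2 3 * hd

theorem isScaledSymmetry_conj_swap_mul_swap {a : Fin 4 → Fin 4 → k}
    (hsym : ∀ i j, a i j = a j i) (ha : ∀ i j, i ≠ j → a i j ≠ 0)
    (hsq : ∀ c : k, ∃ d : k, d ^ 2 = c) (τ : Perm (Fin 4)) :
    IsScaledSymmetry a (τ * (swap 0 1 * swap 2 3) * τ⁻¹) :=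
  .of_comp τ <| isScaledSymmetry_swap_mul_swap (fun _ _ => hsym _ _)
    (fun _ _ hij => ha _ _ (τ.injective.ne hij)) hsq

end

/-- For `n = 4` with all `a_{ij} ≠ 0` (over a field where every element has a
square root), the image of `G(𝒜)` in `S_4` contains the Klein four-group
`{id, (12)(34), (13)(24), (14)(23)}`. -/
theorem stmt18 (k : Type) [Field k]
    (a : Fin 4 → Fin 4 → k) (hsym : ∀ i j, a i j = a j i)
    (ha : ∀ i j, i ≠ j → a i j ≠ 0)
    (hsq : ∀ c : k, ∃ d : k, d ^ 2 = c) :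
    ∀ σ ∈ ({1, Equiv.swap 0 1 * Equiv.swap 2 3, Equiv.swap 0 2 * Equiv.swap 1 3,
        Equiv.swap 0 3 * Equiv.swap 1 2} : Set (Equiv.Perm (Fin 4))),
      ∃ r : Fin 4 → kˣ,
        ∀ i j, i ≠ j → a i j = (r i : k) * (r j : k) * a (σ i) (σ j) := by
  intro σ hσ
  show IsScaledSymmetry a σ
  have hconj := isScaledSymmetry_conj_swap_mul_swap hsym ha hsq
  simp only [Set.mem_insert_iff, Set.mem_singleton_iff] at hσ
  rcases hσ with rfl | rfl | rfl | rfl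
  · exact isScaledSymmetry_one a
  · simpa only [one_mul, inv_one, mul_one] using hconj 1
  · have : swap 1 2 * (swap 0 1 * swap 2 3) * (swap 1 2)⁻¹ = swap (0 : Fin 4) 2 * swap 1 3 := by
      decide
    exact this ▸ hconj (swap 1 2)
  · have : swap 1 3 * (swap 0 1 * swap 2 3) * (swap 1 3)⁻¹ = swap (0 : Fin 4) 3 * swap 1 2 := by
      decide
    exact this ▸ hconj (swap 1 3)
end
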